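/- arXiv:2012.00807 — 3 statements merged into one kernel-verified Lean document; each statement's English description precedes it below -/
import Mathlib

section
/- Let C_r = {h ∈ H : ‖⟨X,h⟩‖_{L2(μ)} ≥ r‖h‖} and γ = δκ/32. Deterministically (for any realization of the data for which ĥ and ν̂ exist): if ĥ − h* ∉ C_{r*(γ)}, then ‖⟨X, ĥ−h*⟩‖_{L2(μ)} ≤ r*(γ)·(2‖h*‖ + ‖ν̂‖). Moreover, if there exists ζ > 0 with Δ(γ,h*) ≥ ζ, then if ĥ − h* ∉ C_{r*(γ)} one has ‖⟨X, ĥ−h*⟩‖_{L2(μ)} ≤ r*(γ)·‖ν̂‖/ζ. -/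
open MeasureTheory
open scoped RealInnerProductSpace ENNReal

noncomputable section

/-- The `L2(μ)` norm of `x ↦ ⟪h, x⟫`. -/
def l2m {H : Type*} [NormedAddCommGroup H] [InnerProductSpace ℝ H]
    [MeasurableSpace H] (μ : Measure H) (h : H) : ℝ :=
  Real.sqrt (∫ x, ⟪h, x⟫ ^ (2 : ℕ) ∂μ)

/-- The Rademacher law on `ℝ`: uniform on `{-1, 1}`. -/
def rademacherLaw : Measure ℝ :=
  (2 : ℝ≥0∞)⁻¹ • Measure.dirac (1 : ℝ) + (2 : ℝ≥0∞)⁻¹ • Measure.dirac (-1 : ℝ)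

/-- The local Rademacher complexity fixed point `r*(γ)`. -/
def rstar {H : Type*} [NormedAddCommGroup H] [InnerProductSpace ℝ H]
    [MeasurableSpace H] (μ : Measure H) (N : H → ℝ) (n : ℕ) (γ : ℝ) : ℝ :=
  sInf {r : ℝ | 0 < r ∧
    (∫ z : (Fin n → H) × (Fin n → ℝ),
        (⨆ h : {h : H // N h ≤ 1 ∧ l2m μ h ≤ r}, ∑ i, z.2 i * ⟪z.1 i, h.1⟫)
        ∂((Measure.pi fun _ : Fin n => μ).prod (Measure.pi fun _ : Fin n => rademacherLaw)))
      ≤ γ * n * r}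

/-- The dual norm `‖g‖* = sup_{N x ≤ 1} ⟪g, x⟫` of a norm `N`. -/
def dualNorm {H : Type*} [NormedAddCommGroup H] [InnerProductSpace ℝ H]
    (N : H → ℝ) (g : H) : ℝ :=
  ⨆ x : {x : H // N x ≤ 1}, ⟪g, x.1⟫

/-- The subdifferential `∂(N)_{h*} = {g : ‖g‖* = 1, ⟪g, h*⟫ = N h*}`. -/
def subdiff {H : Type*} [NormedAddCommGroup H] [InnerProductSpace ℝ H]
    (N : H → ℝ) (hstar : H) : Set H :=
  {g : H | dualNorm N g = 1 ∧ ⟪g, hstar⟫ = N hstar}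

/-- `Δ(γ, h*) = inf_{N h = 1, ‖⟪X,h⟫‖_{L2(μ)} ≤ r*(γ)} sup_{g ∈ ∂(N)_{h*}} ⟪g, h⟫`. -/
def DeltaSD {H : Type*} [NormedAddCommGroup H] [InnerProductSpace ℝ H]
    [MeasurableSpace H] (μ : Measure H) (N : H → ℝ) (n : ℕ) (γ : ℝ) (hstar : H) : ℝ :=
  ⨅ h : {h : H // N h = 1 ∧ l2m μ h ≤ rstar μ N n γ},
    ⨆ g : subdiff N hstar, ⟪g.1, h.1⟫

section Aux

variable {H : Type*} [NormedAddCommGroup H] [InnerProductSpace ℝ H]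

lemma aux_N_zero (N : H → ℝ) (hNzero : ∀ x : H, N x = 0 ↔ x = 0) : N 0 = 0 :=
  (hNzero 0).mpr rfl

lemma aux_N_nonneg (N : H → ℝ)
    (hNtri : ∀ x y : H, N (x + y) ≤ N x + N y)
    (hNsmul : ∀ (c : ℝ) (x : H), N (c • x) = |c| * N x)
    (hNzero : ∀ x : H, N x = 0 ↔ x = 0) (h : H) : 0 ≤ N h := by
  have h1 : N 0 ≤ N h + N (-h) := by
    have := hNtri h (-h); simpa using this
  have h2 : N (-h) = N h := by
    have := hNsmul (-1) h; simpa using this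
  rw [aux_N_zero N hNzero, h2] at h1
  linarith

lemma aux_inner_le_dual (N : H → ℝ)
    (hNsmul : ∀ (c : ℝ) (x : H), N (c • x) = |c| * N x)
    (hNzero : ∀ x : H, N x = 0 ↔ x = 0)
    (hNneg : ∀ h : H, 0 ≤ N h)
    (g : H) (hg : dualNorm N g = 1) (h : H) : ⟪g, h⟫ ≤ N h := by
  rcases eq_or_lt_of_le (hNneg h) with h0 | hpos
  · have : h = 0 := (hNzero h).mp h0.symm
    rw [this, inner_zero_right, aux_N_zero N hNzero]
  · have hbdd : BddAbove (Set.range fun x : {x : H // N x ≤ 1} => ⟪g, x.1⟫) := by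
      by_contra hb
      have := Real.iSup_of_not_bddAbove hb
      rw [dualNorm] at hg
      rw [this] at hg
      norm_num at hg
    have hmem : N ((N h)⁻¹ • h) ≤ 1 := by
      rw [hNsmul, abs_of_pos (inv_pos.mpr hpos), inv_mul_cancel₀ (ne_of_gt hpos)]
    have hle : ⟪g, (N h)⁻¹ • h⟫ ≤ dualNorm N g :=
      le_ciSup hbdd (⟨(N h)⁻¹ • h, hmem⟩ : {x : H // N x ≤ 1})
    rw [hg, real_inner_smul_right] at hle
    calc ⟪g, h⟫ = N h * ((N h)⁻¹ * ⟪g, h⟫) := by field_simp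
    _ ≤ N h * 1 := mul_le_mul_of_nonneg_left hle (le_of_lt hpos)
    _ = N h := mul_one _

lemma aux_l2m_smul [MeasurableSpace H] (μ : Measure H) (c : ℝ) (h : H) :
    l2m μ (c • h) = |c| * l2m μ h := by
  unfold l2m
  rw [show (∫ x, ⟪c • h, x⟫ ^ (2 : ℕ) ∂μ) = ∫ x, c ^ 2 * ⟪h, x⟫ ^ (2 : ℕ) ∂μ from by
        congr 1; funext x; rw [real_inner_smul_left]; ring,
    integral_const_mul, Real.sqrt_mul (sq_nonneg c), Real.sqrt_sq_eq_abs]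

end Aux

/-- **Proposition (deterministic bound off the cone).**
For any realization `x₁,…,xₙ` of the covariates for which the minimum norm interpolators
`ĥ` (of the data) and `ν̂` (of the errors) exist: if `ĥ - h* ∉ C_{r*(γ)}` with `γ = δκ/32`,
where `C_r = {h : ‖⟪X,h⟫‖_{L2(μ)} ≥ r N(h)}`, then
`‖⟪X, ĥ - h*⟫‖_{L2(μ)} ≤ r*(γ) (2 N(h*) + N(ν̂))`; and if moreover `Δ(γ,h*) ≥ ζ` for some
`ζ > 0`, then `‖⟪X, ĥ - h*⟫‖_{L2(μ)} ≤ r*(γ) N(ν̂)/ζ`. -/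
theorem min_norm_interpolator_off_cone
    {H : Type*} [NormedAddCommGroup H] [InnerProductSpace ℝ H]
    [MeasurableSpace H] [BorelSpace H]
    (μ : Measure H) [IsProbabilityMeasure μ]
    (n : ℕ) (x : Fin n → H)
    -- `N` is a norm on `H`
    (N : H → ℝ)
    (hNtri : ∀ x y : H, N (x + y) ≤ N x + N y)
    (hNsmul : ∀ (c : ℝ) (x : H), N (c • x) = |c| * N x)
    (hNzero : ∀ x : H, N x = 0 ↔ x = 0)
    -- the data: `Yᵢ = ⟪xᵢ, h*⟫ + ξᵢ` with arbitrary errors `ξ`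
    (hstar : H) (ξ : Fin n → ℝ)
    -- `ĥ` is a minimum `N`-norm interpolator of the data
    (hhat : H)
    (hhat_interp : ∀ i, ⟪x i, hhat⟫ = ⟪x i, hstar⟫ + ξ i)
    (hhat_min : ∀ h : H, (∀ i, ⟪x i, h⟫ = ⟪x i, hstar⟫ + ξ i) → N hhat ≤ N h)
    -- `ν̂` is a minimum `N`-norm interpolator of the errors
    (nuhat : H)
    (nuhat_interp : ∀ i, ⟪x i, nuhat⟫ = ξ i)
    (nuhat_min : ∀ h : H, (∀ i, ⟪x i, h⟫ = ξ i) → N nuhat ≤ N h)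
    (δ κ γ : ℝ) (hγ : γ = δ * κ / 32)
    -- `ĥ - h* ∉ C_{r*(γ)}`
    (hnotcone : ¬ (rstar μ N n γ * N (hhat - hstar) ≤ l2m μ (hhat - hstar))) :
    l2m μ (hhat - hstar) ≤ rstar μ N n γ * (2 * N hstar + N nuhat)
    ∧ ∀ ζ : ℝ, 0 < ζ → ζ ≤ DeltaSD μ N n γ hstar →
        l2m μ (hhat - hstar) ≤ rstar μ N n γ * N nuhat / ζ := by
  have hNneg : ∀ h : H, 0 ≤ N h := aux_N_nonneg N hNtri hNsmul hNzero
  set d := hhat - hstar with hd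
  set R := rstar μ N n γ with hR
  -- basic consequences of being off the cone
  have hlt : l2m μ d < R * N d := lt_of_not_ge hnotcone
  have hl2nn : 0 ≤ l2m μ d := Real.sqrt_nonneg _
  have hprod : 0 < R * N d := lt_of_le_of_lt hl2nn hlt
  have hNd : 0 < N d := by
    rcases eq_or_lt_of_le (hNneg d) with h0 | h; · rw [← h0] at hprod; simp at hprod
    exact h
  have hRpos : 0 < R := by
    by_contra hr
    push_neg at hr
    nlinarith
  -- `ĥ` norm bound: `h* + ν̂` interpolates the data
  have hhatN : N hhat ≤ N hstar + N nuhat := by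
    refine le_trans (hhat_min (hstar + nuhat) ?_) (hNtri hstar nuhat)
    intro i; rw [inner_add_right, nuhat_interp i]
  have hNneg' : N (-hstar) = N hstar := by
    have := hNsmul (-1) hstar; simpa using this
  have hdN : N d ≤ 2 * N hstar + N nuhat := by
    have := hNtri hhat (-hstar)
    rw [hNneg'] at this
    have hsub : hhat + -hstar = d := by rw [hd]; abel
    rw [hsub] at this
    linarith
  constructor
  · calc l2m μ d ≤ R * N d := le_of_lt hlt
    _ ≤ R * (2 * N hstar + N nuhat) := mul_le_mul_of_nonneg_left hdN (le_of_lt hRpos)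
  · intro ζ hζ hζΔ
    -- normalized direction
    set h₀ : H := (N d)⁻¹ • d with hh₀
    have hNh₀ : N h₀ = 1 := by
      rw [hh₀, hNsmul, abs_of_pos (inv_pos.mpr hNd), inv_mul_cancel₀ (ne_of_gt hNd)]
    have hl2h₀ : l2m μ h₀ ≤ R := by
      rw [hh₀, aux_l2m_smul, abs_of_pos (inv_pos.mpr hNd)]
      rw [inv_mul_le_iff₀ hNd, mul_comm]
      exact le_of_lt hlt
    -- bound `⟪g, d⟫ ≤ N ν̂` for `g` in the subdifferential
    have hkey : ∀ g : subdiff N hstar, ⟪g.1, d⟫ ≤ N nuhat := by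
      rintro ⟨g, hg1, hg2⟩
      have hgle : ⟪g, hhat⟫ ≤ N hhat :=
        aux_inner_le_dual N hNsmul hNzero hNneg g hg1 hhat
      have : ⟪g, d⟫ = ⟪g, hhat⟫ - ⟪g, hstar⟫ := by rw [hd, inner_sub_right]
      rw [this, hg2]
      linarith
    -- hence the sup over the subdifferential at `h₀` is at most `N ν̂ / N d`
    have hsup : (⨆ g : subdiff N hstar, ⟪g.1, h₀⟫) ≤ N nuhat / N d := by
      rcases isEmpty_or_nonempty (subdiff N hstar) with hE | hNE
      · rw [Real.iSup_of_isEmpty]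
        exact div_nonneg (hNneg nuhat) (le_of_lt hNd)
      · refine ciSup_le fun g => ?_
        rw [hh₀, real_inner_smul_right, div_eq_inv_mul]
        exact mul_le_mul_of_nonneg_left (hkey g) (le_of_lt (inv_pos.mpr hNd))
    -- the infimum is bounded below so `Δ ≤` the value at `h₀`
    have hbddB : BddBelow (Set.range fun h : {h : H // N h = 1 ∧ l2m μ h ≤ R} =>
        ⨆ g : subdiff N hstar, ⟪g.1, h.1⟫) := by
      refine ⟨-1, ?_⟩
      rintro y ⟨⟨h, hh1, hh2⟩, rfl⟩
      show -1 ≤ ⨆ g : subdiff N hstar, ⟪g.1, h⟫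
      rcases isEmpty_or_nonempty (subdiff N hstar) with hE | hNE
      · rw [Real.iSup_of_isEmpty]; norm_num
      · obtain ⟨g₀⟩ := hNE
        have hbddA : BddAbove (Set.range fun g : subdiff N hstar => ⟪g.1, h⟫) := by
          refine ⟨N h, ?_⟩
          rintro y ⟨g, rfl⟩
          exact aux_inner_le_dual N hNsmul hNzero hNneg g.1 g.2.1 h
        have hlow : -1 ≤ ⟪g₀.1, h⟫ := by
          have := aux_inner_le_dual N hNsmul hNzero hNneg g₀.1 g₀.2.1 (-h)
          rw [inner_neg_right] at this
          have hNnegh : N (-h) = N h := by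
            have := hNsmul (-1) h; simpa using this
          rw [hNnegh, hh1] at this
          linarith
        exact le_trans hlow (le_ciSup hbddA g₀)
    have hΔle : DeltaSD μ N n γ hstar ≤ ⨆ g : subdiff N hstar, ⟪g.1, h₀⟫ :=
      ciInf_le hbddB (⟨h₀, hNh₀, hl2h₀⟩ : {h : H // N h = 1 ∧ l2m μ h ≤ R})
    have hζle : ζ ≤ N nuhat / N d := le_trans (le_trans hζΔ hΔle) hsup
    have hζNd : ζ * N d ≤ N nuhat := by
      rw [div_eq_inv_mul] at hζle
      calc ζ * N d ≤ ((N d)⁻¹ * N nuhat) * N d :=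
        mul_le_mul_of_nonneg_right hζle (le_of_lt hNd)
      _ = N nuhat := by field_simp
    calc l2m μ d ≤ R * N d := le_of_lt hlt
    _ ≤ R * (N nuhat / ζ) := by
        refine mul_le_mul_of_nonneg_left ?_ (le_of_lt hRpos)
        rw [le_div_iff₀ hζ, mul_comm]
        exact hζNd
    _ = R * N nuhat / ζ := by ring

end
end

section
/- For every λ > 0, any regularized empirical risk minimizer ĥ_λ satisfies ‖ĥ_λ‖ ≤ ‖h*‖ + ‖ν̂‖, where ν̂ is a minimum ‖·‖-norm interpolator of the errors (assumed to exist). -/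
open scoped RealInnerProductSpace

/-- **Lemma (norm control for RERM).**
For every `λ > 0`, any regularized empirical risk minimizer `ĥ_λ` satisfies
`N(ĥ_λ) ≤ N(h*) + N(ν̂)`, where `ν̂` is a minimum `N`-norm interpolator of the errors. -/
theorem rerm_norm_control
    {H : Type*} [NormedAddCommGroup H] [InnerProductSpace ℝ H]
    -- `N` is a norm on `H`
    (N : H → ℝ)
    (hNtri : ∀ x y : H, N (x + y) ≤ N x + N y)
    (hNsmul : ∀ (c : ℝ) (x : H), N (c • x) = |c| * N x)
    (hNzero : ∀ x : H, N x = 0 ↔ x = 0)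
    -- the data: `Yᵢ = ⟪Xᵢ, h*⟫ + ξᵢ` with arbitrary errors `ξ`
    (n : ℕ) (X : Fin n → H) (hstar : H) (ξ : Fin n → ℝ)
    (lam : ℝ) (hlam : 0 < lam)
    -- `ĥ_λ` minimizes `h ↦ (1/n) ∑ᵢ (Yᵢ - ⟪Xᵢ,h⟫)² + 2 λ N(h)`
    (hhat : H)
    (hhat_min : ∀ h : H,
      (1 / (n : ℝ)) * ∑ i, ((⟪X i, hstar⟫ + ξ i) - ⟪X i, hhat⟫) ^ 2 + 2 * lam * N hhat
        ≤ (1 / (n : ℝ)) * ∑ i, ((⟪X i, hstar⟫ + ξ i) - ⟪X i, h⟫) ^ 2 + 2 * lam * N h)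
    -- `ν̂` is a minimum `N`-norm interpolator of the errors
    (nuhat : H)
    (nuhat_interp : ∀ i, ⟪X i, nuhat⟫ = ξ i)
    (nuhat_min : ∀ h : H, (∀ i, ⟪X i, h⟫ = ξ i) → N nuhat ≤ N h) :
    N hhat ≤ N hstar + N nuhat := by
  have key := hhat_min (hstar + nuhat)
  have hz : ∀ i : Fin n, ((⟪X i, hstar⟫ + ξ i) - ⟪X i, hstar + nuhat⟫) ^ 2 = 0 := by
    intro i
    rw [inner_add_right, nuhat_interp i]
    ring
  rw [Finset.sum_congr rfl (fun i _ => hz i)] at key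
  simp only [Finset.sum_const_zero, mul_zero, zero_add] at key
  have hsum : 0 ≤ (1 / (n : ℝ)) * ∑ i, ((⟪X i, hstar⟫ + ξ i) - ⟪X i, hhat⟫) ^ 2 := by
    apply mul_nonneg (by positivity)
    exact Finset.sum_nonneg fun i _ => sq_nonneg _
  have h1 : 2 * lam * N hhat ≤ 2 * lam * N (hstar + nuhat) := by linarith
  have h2 : N hhat ≤ N (hstar + nuhat) := le_of_mul_le_mul_left h1 (by linarith)
  exact h2.trans (hNtri hstar nuhat)
end

section
/- Let h* ∈ ℝ^p with support I = supp(h*) of cardinality s, and let Σ be a positive definite matrix satisfying the restricted eigenvalue condition with parameter ψ > 0 relative to I. Let r > 0 satisfy 2√s·r/ψ ≤ 1/2. Then for every h ∈ ℝ^p with ‖h‖₁ = 1 and ‖Σ^{1/2}h‖₂ ≤ r, there exists g ∈ ℝ^p with ‖g‖_∞ ≤ 1 and ⟨g,h*⟩ = ‖h*‖₁ such that ⟨g,h⟩ ≥ 1/2. -/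
/-! Write `a` and `b` for the `ℓ₁`-mass of `h` on and off `I = supp h*`, so `a + b = 1`.
If `b ≤ 3a`, the restricted eigenvalue condition and Cauchy–Schwarz on `I` give
`a ≤ √s ‖P_I h‖₂ ≤ √s ‖Σ^{1/2} h‖₂ / ψ ≤ √s r / ψ ≤ 1/4`; otherwise `4a < a + b = 1`.
The subgradient `g = sign h*` on `I`, `g = sign h` off `I` then has
`⟨g, h⟩ ≥ b - a = 1 - 2a ≥ 1/2`. -/

noncomputable section

section
open scoped ComplexOrder

/-- The square root of a positive semidefinite matrix (removed from Mathlib; restored here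
with its former definition). -/
def Matrix.PosSemidef.sqrt {n 𝕜 : Type*} [Fintype n] [RCLike 𝕜] [DecidableEq n]
    {A : Matrix n n 𝕜} (hA : A.PosSemidef) : Matrix n n 𝕜 :=
  hA.1.eigenvectorUnitary.1 * Matrix.diagonal ((↑) ∘ (√·) ∘ hA.1.eigenvalues) *
    (star hA.1.eigenvectorUnitary : Matrix n n 𝕜)

end

open Finset

namespace Real

lemma abs_sign_le_one (x : ℝ) : |sign x| ≤ 1 := by
  rcases sign_apply_eq x with h | h | h <;> simp [h]

lemma sign_mul_self_eq_abs (x : ℝ) : sign x * x = |x| := by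
  rcases lt_trichotomy x 0 with hx | rfl | hx
  · simp [sign_of_neg hx, abs_of_neg hx]
  · simp
  · simp [sign_of_pos hx, abs_of_pos hx]

end Real

lemma Finset.sum_abs_le_sqrt_card_mul_sqrt_sum_sq {ι : Type*} (s : Finset ι) (f : ι → ℝ) :
    ∑ j ∈ s, |f j| ≤ √(#s : ℝ) * √(∑ j ∈ s, f j ^ 2) := by
  rw [← Real.sqrt_mul (Nat.cast_nonneg _)]
  apply Real.le_sqrt_of_sq_le
  simpa only [sq_abs] using sq_sum_le_card_mul_sum_sq (s := s) (f := fun j => |f j|)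

section SignSubgradient

variable {ι : Type*}

/-- A subgradient of the `ℓ₁`-norm at `x`, chosen off `supp x` to align with `h`. -/
def signSubgradient (x h : ι → ℝ) (j : ι) : ℝ :=
  if x j = 0 then Real.sign (h j) else Real.sign (x j)

lemma abs_signSubgradient_le_one (x h : ι → ℝ) (j : ι) : |signSubgradient x h j| ≤ 1 := by
  unfold signSubgradient
  split_ifs <;> exact Real.abs_sign_le_one _

lemma sum_signSubgradient_mul_self [Fintype ι] (x h : ι → ℝ) :
    ∑ j, signSubgradient x h j * x j = ∑ j, |x j| := by
  refine sum_congr rfl fun j _ => ?_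
  unfold signSubgradient
  split_ifs with hj
  · simp [hj]
  · exact Real.sign_mul_self_eq_abs _

lemma sum_abs_off_support_sub_sum_abs_on_support_le [Fintype ι] (x h : ι → ℝ) :
    (∑ j, if x j ≠ 0 then 0 else |h j|) - (∑ j, if x j ≠ 0 then |h j| else 0) ≤
      ∑ j, signSubgradient x h j * h j := by
  rw [← sum_sub_distrib]
  refine sum_le_sum fun j _ => ?_
  by_cases hj : x j = 0
  · simp [signSubgradient, hj, Real.sign_mul_self_eq_abs]
  · have hbound : |signSubgradient x h j * h j| ≤ |h j| := by
      rw [abs_mul]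
      exact mul_le_of_le_one_left (abs_nonneg _) (abs_signSubgradient_le_one x h j)
    simpa [hj] using neg_abs_le _ |>.trans' (neg_le_neg hbound)

end SignSubgradient

theorem l1_subdifferential_lower_bound_general
    (p : ℕ) (hstar : Fin p → ℝ) (s : ℕ)
    (hs : s = (Finset.univ.filter fun j => hstar j ≠ 0).card)
    (Sm : Matrix (Fin p) (Fin p) ℝ) (hS : Sm.PosDef)
    (ψ : ℝ) (hψ : 0 < ψ)
    -- restricted eigenvalue condition with parameter `ψ` relative to `I = supp(h*)`
    (hRE : ∀ h : Fin p → ℝ,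
      (∑ j, if hstar j ≠ 0 then 0 else |h j|) ≤
          3 * (∑ j, if hstar j ≠ 0 then |h j| else 0) →
      ψ * Real.sqrt (∑ j, if hstar j ≠ 0 then h j ^ 2 else 0) ≤
        Real.sqrt (∑ j, (hS.posSemidef.sqrt.mulVec h) j ^ 2))
    (r : ℝ) (hrψ : 2 * Real.sqrt s * r / ψ ≤ 1 / 2) :
    ∀ h : Fin p → ℝ, (∑ j, |h j|) = 1 →
      Real.sqrt (∑ j, (hS.posSemidef.sqrt.mulVec h) j ^ 2) ≤ r →
      ∃ g : Fin p → ℝ, (∀ j, |g j| ≤ 1) ∧ (∑ j, g j * hstar j) = (∑ j, |hstar j|) ∧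
        1 / 2 ≤ ∑ j, g j * h j := by
  intro h hnorm hSh
  set a := ∑ j, if hstar j ≠ 0 then |h j| else 0
  set b := ∑ j, if hstar j ≠ 0 then 0 else |h j|
  have hab : a + b = 1 := by
    rw [← hnorm, ← sum_add_distrib]
    exact sum_congr rfl fun j _ => by split_ifs <;> simp
  have ha : a ≤ 1 / 4 := by
    by_cases hcone : b ≤ 3 * a
    · have hcs : a ≤ √s * √(∑ j, if hstar j ≠ 0 then h j ^ 2 else 0) := by
        simpa only [hs, sum_filter] using sum_abs_le_sqrt_card_mul_sqrt_sum_sq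
          (univ.filter fun j => hstar j ≠ 0) h
      have hsupp : √(∑ j, if hstar j ≠ 0 then h j ^ 2 else 0) ≤ r / ψ := by
        rw [le_div_iff₀ hψ, mul_comm]
        exact (hRE h hcone).trans hSh
      calc a ≤ √s * (r / ψ) := hcs.trans (mul_le_mul_of_nonneg_left hsupp (Real.sqrt_nonneg _))
        _ = (2 * √s * r / ψ) / 2 := by ring
        _ ≤ 1 / 4 := by linarith
    · linarith
  refine ⟨signSubgradient hstar h, abs_signSubgradient_le_one hstar h,
    sum_signSubgradient_mul_self hstar h, ?_⟩
  linarith [sum_abs_off_support_sub_sum_abs_on_support_le hstar h]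

/-- **Lemma (subdifferential lower bound for the `ℓ₁`-norm under the restricted
eigenvalue condition).**
If `Σ` is positive definite and satisfies the restricted eigenvalue condition with
parameter `ψ` relative to `I = supp(h*)`, `|I| = s`, and `r > 0` satisfies
`2√s r/ψ ≤ 1/2`, then for every `h` with `‖h‖₁ = 1` and `‖Σ^{1/2}h‖₂ ≤ r` there is a
subgradient `g` of the `ℓ₁`-norm at `h*` (i.e. `‖g‖_∞ ≤ 1` and `⟨g,h*⟩ = ‖h*‖₁`) with
`⟨g,h⟩ ≥ 1/2`. -/
theorem l1_subdifferential_lower_bound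
    (p : ℕ) (hstar : Fin p → ℝ) (s : ℕ)
    (hs : s = (Finset.univ.filter fun j => hstar j ≠ 0).card)
    (Sm : Matrix (Fin p) (Fin p) ℝ) (hS : Sm.PosDef)
    (ψ : ℝ) (hψ : 0 < ψ)
    -- restricted eigenvalue condition with parameter `ψ` relative to `I = supp(h*)`
    (hRE : ∀ h : Fin p → ℝ,
      (∑ j, if hstar j ≠ 0 then 0 else |h j|) ≤
          3 * (∑ j, if hstar j ≠ 0 then |h j| else 0) →
      ψ * Real.sqrt (∑ j, if hstar j ≠ 0 then h j ^ 2 else 0) ≤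
        Real.sqrt (∑ j, (hS.posSemidef.sqrt.mulVec h) j ^ 2))
    (r : ℝ) (hr : 0 < r) (hrψ : 2 * Real.sqrt s * r / ψ ≤ 1 / 2) :
    ∀ h : Fin p → ℝ, (∑ j, |h j|) = 1 →
      Real.sqrt (∑ j, (hS.posSemidef.sqrt.mulVec h) j ^ 2) ≤ r →
      ∃ g : Fin p → ℝ, (∀ j, |g j| ≤ 1) ∧ (∑ j, g j * hstar j) = (∑ j, |hstar j|) ∧
        1 / 2 ≤ ∑ j, g j * h j :=
  l1_subdifferential_lower_bound_general p hstar s hs Sm hS ψ hψ hRE r hrψ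

end
end
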